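/- Let A be a sequential vset-automaton, let q be a state of A that is visited by some accepting run of A on some document, and let x ∈ Vars(A). Consider the runs from the initial state q0 to q that are prefixes of accepting runs of A. Then exactly one of the following four conditions holds: (i) every such run opens x and does not close it; (ii) every such run opens and closes x; (iii) no such run opens x; (iv) at least one such run opens and closes x and at least one such run does not open x. -/

import Mathlib

namespace Spanners

open scoped Classical

/-! ### Spans and mappings -/

abbrev Span := ℕ × ℕ

abbrev VMapping := ℕ → Option Span

def emptyMapping : VMapping := fun _ => none

def mapDom (μ : VMapping) : Set ℕ := {x | μ x ≠ none}

/-- Two mappings are compatible if they agree on every common variable. -/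
def Compatible (μ1 μ2 : VMapping) : Prop :=
  ∀ x s1 s2, μ1 x = some s1 → μ2 x = some s2 → s1 = s2

def DisjointDom (μ1 μ2 : VMapping) : Prop :=
  ∀ x, μ1 x = none ∨ μ2 x = none

def munion (μ1 μ2 : VMapping) : VMapping := fun x =>
  match μ1 x with
  | some s => some s
  | none => μ2 x

def minsert (x : ℕ) (s : Span) (μ : VMapping) : VMapping :=
  fun y => if y = x then some s else μ y

/-- Natural join of two sets of mappings. -/
def joinSet (S1 S2 : Set VMapping) : Set VMapping :=
  {μ | ∃ μ1 ∈ S1, ∃ μ2 ∈ S2, Compatible μ1 μ2 ∧ μ = munion μ1 μ2}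

/-- Difference of two sets of mappings. -/
def diffSet (S1 S2 : Set VMapping) : Set VMapping :=
  {μ1 | μ1 ∈ S1 ∧ ∀ μ2 ∈ S2, ¬ Compatible μ1 μ2}

/-- Restriction of a mapping to a set of variables. -/
noncomputable def restrictMap (μ : VMapping) (V : Set ℕ) : VMapping :=
  fun x => if x ∈ V then μ x else none

/-- Projection of a set of mappings to a set of variables. -/
def projSet (V : Set ℕ) (S : Set VMapping) : Set VMapping :=
  {μ' | ∃ μ ∈ S, μ' = restrictMap μ V}

/-! ### Regex formulas -/

inductive RGX (Sig : Type) where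
  | empty : RGX Sig
  | eps : RGX Sig
  | letter : Sig → RGX Sig
  | union : RGX Sig → RGX Sig → RGX Sig
  | concat : RGX Sig → RGX Sig → RGX Sig
  | star : RGX Sig → RGX Sig
  | bind : ℕ → RGX Sig → RGX Sig

variable {Sig : Type}

def RGX.vars : RGX Sig → Finset ℕ
  | .empty => ∅
  | .eps => ∅
  | .letter _ => ∅
  | .union a b => a.vars ∪ b.vars
  | .concat a b => a.vars ∪ b.vars
  | .star a => a.vars
  | .bind x a => insert x a.vars

def RGX.size : RGX Sig → ℕ
  | .empty => 1
  | .eps => 1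
  | .letter _ => 1
  | .union a b => a.size + b.size + 1
  | .concat a b => a.size + b.size + 1
  | .star a => a.size + 1
  | .bind _ a => a.size + 1

/-- The schemaless semantics `⟨α⟩(d)`: `RMatch α d i j μ` means `([i,j⟩, μ) ∈ ⟨α⟩(d)`. -/
inductive RMatch : RGX Sig → List Sig → ℕ → ℕ → VMapping → Prop where
  | eps {d : List Sig} {i : ℕ} (h1 : 1 ≤ i) (h2 : i ≤ d.length + 1) :
      RMatch .eps d i i emptyMapping
  | letter {d : List Sig} {i : ℕ} {σ : Sig} (h1 : 1 ≤ i) (h2 : d[i - 1]? = some σ) :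
      RMatch (.letter σ) d i (i + 1) emptyMapping
  | unionL {a b : RGX Sig} {d : List Sig} {i j : ℕ} {μ : VMapping}
      (h : RMatch a d i j μ) : RMatch (.union a b) d i j μ
  | unionR {a b : RGX Sig} {d : List Sig} {i j : ℕ} {μ : VMapping}
      (h : RMatch b d i j μ) : RMatch (.union a b) d i j μ
  | concat {a b : RGX Sig} {d : List Sig} {i k j : ℕ} {μ1 μ2 : VMapping}
      (h1 : RMatch a d i k μ1) (h2 : RMatch b d k j μ2) (hd : DisjointDom μ1 μ2) :
      RMatch (.concat a b) d i j (munion μ1 μ2)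
  | bind {x : ℕ} {a : RGX Sig} {d : List Sig} {i j : ℕ} {μ : VMapping}
      (h : RMatch a d i j μ) (hx : μ x = none) :
      RMatch (.bind x a) d i j (minsert x (i, j) μ)
  | starNil {a : RGX Sig} {d : List Sig} {i : ℕ} (h1 : 1 ≤ i) (h2 : i ≤ d.length + 1) :
      RMatch (.star a) d i i emptyMapping
  | starCons {a : RGX Sig} {d : List Sig} {i k j : ℕ} {μ1 μ2 : VMapping}
      (h1 : RMatch a d i k μ1) (h2 : RMatch (.star a) d k j μ2) (hd : DisjointDom μ1 μ2) :
      RMatch (.star a) d i j (munion μ1 μ2)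

/-- `⟦α⟧(d)`: mappings extracted with the full span. -/
def rgxSem (α : RGX Sig) (d : List Sig) : Set VMapping :=
  {μ | RMatch α d 1 (d.length + 1) μ}

/-- Sequential regex formulas. -/
def RGX.Sequential : RGX Sig → Prop
  | .empty => True
  | .eps => True
  | .letter _ => True
  | .union a b => a.Sequential ∧ b.Sequential
  | .concat a b => a.Sequential ∧ b.Sequential ∧ Disjoint a.vars b.vars
  | .star a => a.Sequential ∧ a.vars = ∅
  | .bind x a => a.Sequential ∧ x ∉ a.vars

/-- Variable-free words over the alphabet (built from ε, letters and concatenation). -/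
inductive RGX.IsWord : RGX Sig → Prop where
  | eps : RGX.IsWord .eps
  | letter (σ : Sig) : RGX.IsWord (.letter σ)
  | concat {a b : RGX Sig} : a.IsWord → b.IsWord → RGX.IsWord (.concat a b)

/-- Functional for a set `V` of variables. -/
inductive FunctionalFor : RGX Sig → Finset ℕ → Prop where
  | word {α : RGX Sig} (h : α.IsWord) : FunctionalFor α ∅
  | union {a b : RGX Sig} {V : Finset ℕ} (ha : FunctionalFor a V) (hb : FunctionalFor b V) :
      FunctionalFor (.union a b) V
  | concat {a b : RGX Sig} {V : Finset ℕ} (V1 : Finset ℕ) (hsub : V1 ⊆ V)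
      (ha : FunctionalFor a V1) (hb : FunctionalFor b (V \ V1)) :
      FunctionalFor (.concat a b) V
  | star {a : RGX Sig} (h : FunctionalFor a ∅) : FunctionalFor (.star a) ∅
  | bind {x : ℕ} {a : RGX Sig} {V : Finset ℕ} (h : FunctionalFor a (V.erase x)) :
      FunctionalFor (.bind x a) V

def RGX.Functional (α : RGX Sig) : Prop := FunctionalFor α α.vars

/-- Disjunctive functional regex formulas: finite disjunctions of functional regex formulas. -/
inductive DisjFunctional : RGX Sig → Prop where
  | base {γ : RGX Sig} (h : γ.Functional) : DisjFunctional γ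
  | union {a b : RGX Sig} (ha : DisjFunctional a) (hb : DisjFunctional b) :
      DisjFunctional (.union a b)

/-- Number of disjuncts of a (disjunctive) regex formula. -/
def countDisjuncts : RGX Sig → ℕ
  | .union a b => countDisjuncts a + countDisjuncts b
  | _ => 1

/-- Disjunction-free regex formulas. -/
def RGX.DisjFree : RGX Sig → Prop
  | .union _ _ => False
  | .concat a b => a.DisjFree ∧ b.DisjFree
  | .star a => a.DisjFree
  | .bind _ a => a.DisjFree
  | _ => True

/-- `γ` is synchronized for `x`: no subformula `γ1 ∨ γ2` contains `x`. -/
def RGX.SyncFor : RGX Sig → ℕ → Prop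
  | .union a b, x => (x ∉ a.vars ∧ x ∉ b.vars) ∧ a.SyncFor x ∧ b.SyncFor x
  | .concat a b, x => a.SyncFor x ∧ b.SyncFor x
  | .star a, x => a.SyncFor x
  | .bind _ a, x => a.SyncFor x
  | _, _ => True

/-- Concatenation of a list of regex formulas. -/
def concatList : List (RGX Sig) → RGX Sig
  | [] => .eps
  | [α] => α
  | α :: rest => .concat α (concatList rest)

/-- Disjunction of a list of regex formulas. -/
def disjList : List (RGX Sig) → RGX Sig
  | [] => .empty
  | [α] => α
  | α :: rest => .union α (disjList rest)

/-! ### vset-automata -/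

inductive VLabel (Sig : Type) where
  | eps : VLabel Sig
  | letter : Sig → VLabel Sig
  | openv : ℕ → VLabel Sig
  | closev : ℕ → VLabel Sig
deriving DecidableEq

structure VA (Sig : Type) [DecidableEq Sig] where
  q0 : ℕ
  F : Finset ℕ
  δ : Finset (ℕ × VLabel Sig × ℕ)

variable [DecidableEq Sig]

/-- The states of a VA: the initial state and all states mentioned in `F` or in transitions. -/
def statesOf (A : VA Sig) : Finset ℕ :=
  insert A.q0 (A.F ∪ A.δ.image (fun t => t.1) ∪ A.δ.image (fun t => t.2.2))

def labelVars : VLabel Sig → Finset ℕ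
  | .openv x => {x}
  | .closev x => {x}
  | _ => ∅

/-- `Vars(A)`: the variables mentioned in the transitions of `A`. -/
def varsOf (A : VA Sig) : Finset ℕ := A.δ.biUnion (fun t => labelVars t.2.1)

/-- Total size of a VA: number of states plus number of transitions. -/
def vaSize (A : VA Sig) : ℕ := (statesOf A).card + A.δ.card

/-- `A.PathFrom p ls q`: a path (run segment) from `p` to `q` with label sequence `ls`. -/
inductive VA.PathFrom (A : VA Sig) : ℕ → List (VLabel Sig) → ℕ → Prop where
  | nil (q : ℕ) : VA.PathFrom A q [] q
  | cons {p q r : ℕ} {l : VLabel Sig} {ls : List (VLabel Sig)}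
      (h : (p, l, q) ∈ A.δ) (htail : VA.PathFrom A q ls r) : VA.PathFrom A p (l :: ls) r

/-- The word (document) read by a sequence of labels. -/
def readWord : List (VLabel Sig) → List Sig :=
  List.filterMap fun l => match l with
    | VLabel.letter σ => some σ
    | _ => none

def isLetterL : VLabel Sig → Bool
  | .letter _ => true
  | _ => false

/-- The current position in the document just before executing the `k`-th label. -/
def posAt (ls : List (VLabel Sig)) (k : ℕ) : ℕ := 1 + (ls.take k).countP isLetterL

/-- Validity of a run, given by its label sequence. -/
def ValidLabels (ls : List (VLabel Sig)) : Prop :=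
  ∀ x : ℕ,
    ls.count (VLabel.openv x) ≤ 1 ∧
    ls.count (VLabel.closev x) ≤ 1 ∧
    ((VLabel.openv x) ∈ ls ↔ (VLabel.closev x) ∈ ls) ∧
    ∀ i j : ℕ, ls[i]? = some (VLabel.openv x) → ls[j]? = some (VLabel.closev x) →
      posAt ls i ≤ posAt ls j

/-- The mapping `μ_ρ` extracted from a (valid accepting) run with label sequence `ls`. -/
def runMapping (ls : List (VLabel Sig)) : VMapping := fun x =>
  if (VLabel.openv x) ∈ ls then
    some (posAt ls (ls.idxOf (VLabel.openv x)), posAt ls (ls.idxOf (VLabel.closev x)))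
  else none

/-- `ls` is the label sequence of an accepting run of `A`. -/
def AcceptsWith (A : VA Sig) (ls : List (VLabel Sig)) : Prop :=
  ∃ qf, VA.PathFrom A A.q0 ls qf ∧ qf ∈ A.F

/-- `⟦A⟧(d)`. -/
def vaSem (A : VA Sig) (d : List Sig) : Set VMapping :=
  {μ | ∃ ls, AcceptsWith A ls ∧ readWord ls = d ∧ ValidLabels ls ∧ μ = runMapping ls}

/-- A VA is sequential if all of its accepting runs are valid. -/
def VA.Sequential (A : VA Sig) : Prop := ∀ ls, AcceptsWith A ls → ValidLabels ls

/-- A run from the initial state to `q` that is a prefix of an accepting run. -/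
def PrefixRun (A : VA Sig) (ls : List (VLabel Sig)) (q : ℕ) : Prop :=
  VA.PathFrom A A.q0 ls q ∧ ∃ ls' qf, VA.PathFrom A q ls' qf ∧ qf ∈ A.F

/-- `A` is semi-functional for the variable `x`: no state has extended configuration `d`. -/
def SemiFunctionalFor (A : VA Sig) (x : ℕ) : Prop :=
  ¬ ∃ q ls1 ls2, PrefixRun A ls1 q ∧ PrefixRun A ls2 q ∧
      (VLabel.closev x) ∈ ls1 ∧ (VLabel.openv x) ∉ ls2

def SemiFunctionalForSet (A : VA Sig) (X : Finset ℕ) : Prop :=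
  ∀ x ∈ X, SemiFunctionalFor A x

/-- Functional VA: sequential, and every accepting run opens and closes every variable. -/
def FunctionalVA (A : VA Sig) : Prop :=
  A.Sequential ∧ ∀ ls, AcceptsWith A ls → ∀ x ∈ varsOf A,
    (VLabel.openv x) ∈ ls ∧ (VLabel.closev x) ∈ ls

/-- `l` has a unique target state in `A`. -/
def UniqueTarget (A : VA Sig) (l : VLabel Sig) : Prop :=
  ∃ qt : ℕ, ∀ p q : ℕ, (p, l, q) ∈ A.δ → q = qt

/-- `A` is synchronized for the variable `x`. -/
def SyncForVA (A : VA Sig) (x : ℕ) : Prop :=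
  UniqueTarget A (VLabel.openv x) ∧ UniqueTarget A (VLabel.closev x) ∧
    ((∀ ls, AcceptsWith A ls → (VLabel.openv x) ∈ ls ∧ (VLabel.closev x) ∈ ls) ∨
     (∀ ls, AcceptsWith A ls → (VLabel.openv x) ∉ ls ∧ (VLabel.closev x) ∉ ls))

/-- `A` is the disjunctive functional VA with functional components `parts`. -/
def DisjFunctionalVAWith (A : VA Sig) (parts : List (VA Sig)) : Prop :=
  (∀ B ∈ parts, FunctionalVA B) ∧
  (parts.Pairwise fun B C => Disjoint (statesOf B) (statesOf C)) ∧
  (∀ B ∈ parts, A.q0 ∉ statesOf B) ∧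
  A.F = parts.foldr (fun B s => B.F ∪ s) (∅ : Finset ℕ) ∧
  A.δ = (parts.map (fun B => (A.q0, (VLabel.eps : VLabel Sig), B.q0))).toFinset
        ∪ parts.foldr (fun B s => B.δ ∪ s) (∅ : Finset (ℕ × VLabel Sig × ℕ))

def DisjFunctionalVA (A : VA Sig) : Prop := ∃ parts, DisjFunctionalVAWith A parts

/-! ### 3CNF formulas -/

/-- A 3CNF clause over `n` Boolean variables: a triple of literals; `(i, true)` is `xᵢ`,
`(i, false)` is `¬xᵢ`. -/
def Clause3 (n : ℕ) : Type := (Fin n × Bool) × (Fin n × Bool) × (Fin n × Bool)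

def litsOf {n : ℕ} (c : Clause3 n) : List (Fin n × Bool) := [c.1, c.2.1, c.2.2]

def clauseSat {n : ℕ} (τ : Fin n → Bool) (c : Clause3 n) : Prop :=
  ∃ l ∈ litsOf c, τ l.1 = l.2

def Sat3 {n m : ℕ} (φ : Fin m → Clause3 n) : Prop :=
  ∃ τ : Fin n → Bool, ∀ j, clauseSat τ (φ j)

end Spanners

namespace Spanners

variable {Sig : Type} [DecidableEq Sig]

/-- (i) every prefix run to `q` opens `x` and does not close it. -/
def cfgOpen (A : VA Sig) (q x : ℕ) : Prop :=
  ∀ ls, PrefixRun A ls q → ((VLabel.openv x) ∈ ls ∧ (VLabel.closev x) ∉ ls)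

/-- (ii) every prefix run to `q` opens and closes `x`. -/
def cfgClosed (A : VA Sig) (q x : ℕ) : Prop :=
  ∀ ls, PrefixRun A ls q → ((VLabel.openv x) ∈ ls ∧ (VLabel.closev x) ∈ ls)

/-- (iii) no prefix run to `q` opens `x`. -/
def cfgUnseen (A : VA Sig) (q x : ℕ) : Prop :=
  ∀ ls, PrefixRun A ls q → (VLabel.openv x) ∉ ls

/-- (iv) at least one prefix run to `q` opens and closes `x`, and at least one does not
open `x`. -/
def cfgDone (A : VA Sig) (q x : ℕ) : Prop :=
  (∃ ls, PrefixRun A ls q ∧ (VLabel.openv x) ∈ ls ∧ (VLabel.closev x) ∈ ls) ∧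
  (∃ ls, PrefixRun A ls q ∧ (VLabel.openv x) ∉ ls)

/-!
Two prefix runs to `q` can be completed by the same suffix to accepting runs, which are valid
since `A` is sequential. In a valid run, a prefix has opened `x` without closing it exactly when
the remaining suffix closes `x` without opening it. So whether `x` is pending at `q` does not
depend on the prefix run, and the four configurations follow by case analysis.
-/

theorem VA.PathFrom.append {A : VA Sig} {p q r : ℕ} {ls ls' : List (VLabel Sig)}
    (h : A.PathFrom p ls q) (h' : A.PathFrom q ls' r) : A.PathFrom p (ls ++ ls') r := by
  induction h with
  | nil => exact h'
  | cons ht _ ih => exact .cons ht (ih h')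

theorem ValidLabels.pending_iff_of_append {ls ls' : List (VLabel Sig)}
    (hv : ValidLabels (ls ++ ls')) (x : ℕ) :
    (VLabel.openv x ∈ ls ∧ VLabel.closev x ∉ ls) ↔
      (VLabel.closev x ∈ ls' ∧ VLabel.openv x ∉ ls') := by
  obtain ⟨hopen, hclose, hiff, -⟩ := hv x
  simp only [← List.count_pos_iff, List.count_append] at hopen hclose hiff ⊢
  omega

theorem PrefixRun.pending_iff {A : VA Sig} (hseq : A.Sequential) {q : ℕ}
    {ls₁ ls₂ : List (VLabel Sig)} (h₁ : PrefixRun A ls₁ q) (h₂ : PrefixRun A ls₂ q) (x : ℕ) :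
    (VLabel.openv x ∈ ls₁ ∧ VLabel.closev x ∉ ls₁) ↔
      (VLabel.openv x ∈ ls₂ ∧ VLabel.closev x ∉ ls₂) := by
  obtain ⟨hp₁, ls', qf, hp', hf⟩ := h₁
  rw [(hseq _ ⟨qf, hp₁.append hp', hf⟩).pending_iff_of_append,
    (hseq _ ⟨qf, h₂.1.append hp', hf⟩).pending_iff_of_append]

theorem statement4_general (A : VA Sig) (hseq : A.Sequential) (q x : ℕ)
    (hq : ∃ ls1 ls2 qf, VA.PathFrom A A.q0 ls1 q ∧ VA.PathFrom A q ls2 qf ∧ qf ∈ A.F) :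
    (cfgOpen A q x ∧ ¬ cfgClosed A q x ∧ ¬ cfgUnseen A q x ∧ ¬ cfgDone A q x) ∨
    (¬ cfgOpen A q x ∧ cfgClosed A q x ∧ ¬ cfgUnseen A q x ∧ ¬ cfgDone A q x) ∨
    (¬ cfgOpen A q x ∧ ¬ cfgClosed A q x ∧ cfgUnseen A q x ∧ ¬ cfgDone A q x) ∨
    (¬ cfgOpen A q x ∧ ¬ cfgClosed A q x ∧ ¬ cfgUnseen A q x ∧ cfgDone A q x) := by
  obtain ⟨ls₀, ls', qf, h₀, h', hf⟩ := hq
  have hrun : PrefixRun A ls₀ q := ⟨h₀, ls', qf, h', hf⟩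
  have hopen : (∃ ls, PrefixRun A ls q ∧ VLabel.openv x ∈ ls ∧ VLabel.closev x ∉ ls) →
      cfgOpen A q x :=
    fun ⟨_, hls, hpend⟩ _ hls' => (hls.pending_iff hseq hls' x).1 hpend
  -- A prefix run to `q` leaves `x` pending, or opens and closes it, or does not open it;
  -- `hrun` rules out the vacuous case in which (i)–(iii) would all hold.
  simp only [cfgOpen, cfgClosed, cfgUnseen, cfgDone] at hopen ⊢
  grind

theorem statement4 (A : VA Sig) (hseq : A.Sequential) (q x : ℕ) (hx : x ∈ varsOf A)
    (hq : ∃ ls1 ls2 qf, VA.PathFrom A A.q0 ls1 q ∧ VA.PathFrom A q ls2 qf ∧ qf ∈ A.F) :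
    (cfgOpen A q x ∧ ¬ cfgClosed A q x ∧ ¬ cfgUnseen A q x ∧ ¬ cfgDone A q x) ∨
    (¬ cfgOpen A q x ∧ cfgClosed A q x ∧ ¬ cfgUnseen A q x ∧ ¬ cfgDone A q x) ∨
    (¬ cfgOpen A q x ∧ ¬ cfgClosed A q x ∧ cfgUnseen A q x ∧ ¬ cfgDone A q x) ∨
    (¬ cfgOpen A q x ∧ ¬ cfgClosed A q x ∧ ¬ cfgUnseen A q x ∧ cfgDone A q x) :=
  statement4_general A hseq q x hq

end Spanners
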